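/- The maps κ₁ : (x₁, x₂) ↦ (−x̄₂, −x̄₁) and κ₃ : (x₁, x₂) ↦ (i·x̄₁, −x̄₂) are involutive anti-isometries of the Gaussian lattice L_z. -/
import Mathlib


/-- The imaginary unit `i` in the Gaussian integers `ℤ[i]`. -/
def gi : GaussianInt := Zsqrtd.sqrtd

/-- The underlying `ℤ[i]`-module of the Gaussian lattice `L_z`. -/
abbrev Lz : Type := GaussianInt × GaussianInt

/-- The Hermitian form of `L_z`, given by the matrix `[[-2, 1-i], [1+i, -2]]`;
conjugate-linear in the first argument, linear in the second. -/
def hz (x y : Lz) : GaussianInt :=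
  star x.1 * (-2) * y.1 + star x.1 * (1 - gi) * y.2 +
    star x.2 * (1 + gi) * y.1 + star x.2 * (-2) * y.2

/-- An isometry of `L_z`: a `ℤ[i]`-linear bijection preserving the form `hz`. -/
def IsIsomLz (A : Lz → Lz) : Prop :=
  Function.Bijective A ∧ (∀ x y : Lz, A (x + y) = A x + A y) ∧
    (∀ (c : GaussianInt) (x : Lz), A (c • x) = c • A x) ∧
    ∀ x y : Lz, hz (A x) (A y) = hz x y

/-- An involutive anti-isometry of `L_z`: an additive bijection `ν` with
`ν (c • v) = c̄ • ν v`, `hz (ν x) (ν y) = conj (hz x y)` and `ν ∘ ν = id`. -/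
def IsInvAntiIsomLz (ν : Lz → Lz) : Prop :=
  Function.Bijective ν ∧ (∀ x y : Lz, ν (x + y) = ν x + ν y) ∧
    (∀ (c : GaussianInt) (x : Lz), ν (c • x) = star c • ν x) ∧
    (∀ x y : Lz, hz (ν x) (ν y) = star (hz x y)) ∧
    ∀ x : Lz, ν (ν x) = x

/-- The anti-isometry `κ₁ : (x₁, x₂) ↦ (−x̄₂, −x̄₁)` of `L_z`. -/
def kappa1 (x : Lz) : Lz := (-(star x.2), -(star x.1))

/-- The anti-isometry `κ₃ : (x₁, x₂) ↦ (i·x̄₁, −x̄₂)` of `L_z`. -/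
def kappa3 (x : Lz) : Lz := (gi * star x.1, -(star x.2))

set_option maxHeartbeats 1000000 in
/-- The maps `κ₁ : (x₁, x₂) ↦ (−x̄₂, −x̄₁)` and
`κ₃ : (x₁, x₂) ↦ (i·x̄₁, −x̄₂)` are involutive anti-isometries of the Gaussian
lattice `L_z`. -/
theorem stmt6 : IsInvAntiIsomLz kappa1 ∧ IsInvAntiIsomLz kappa3 := by
  have h1 : ∀ x : Lz, kappa1 (kappa1 x) = x := by
    intro x; simp [kappa1]
  have h3 : ∀ x : Lz, kappa3 (kappa3 x) = x := by
    intro x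
    simp only [kappa3, Prod.ext_iff, gi, Zsqrtd.ext_iff, Zsqrtd.re_mul, Zsqrtd.im_mul]
    simp [Zsqrtd.re_mul, Zsqrtd.im_mul]
  constructor
  · refine ⟨Function.Involutive.bijective h1, ?_, ?_, ?_, h1⟩
    · intro x y; simp [kappa1, Prod.ext_iff]; constructor <;> ring
    · intro c x
      simp [kappa1, Prod.ext_iff, Prod.smul_def, smul_eq_mul, Zsqrtd.ext_iff,
        Zsqrtd.re_mul, Zsqrtd.im_mul]
    · intro x y
      simp [kappa1, hz, gi, Zsqrtd.ext_iff, Zsqrtd.re_mul, Zsqrtd.im_mul]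
      constructor <;> ring
  · refine ⟨Function.Involutive.bijective h3, ?_, ?_, ?_, h3⟩
    · intro x y; simp [kappa3, Prod.ext_iff]; constructor <;> ring
    · intro c x
      simp [kappa3, Prod.ext_iff, Prod.smul_def, smul_eq_mul, Zsqrtd.ext_iff,
        Zsqrtd.re_mul, Zsqrtd.im_mul]
      constructor <;> ring
    · intro x y
      simp [kappa3, hz, gi, Zsqrtd.ext_iff, Zsqrtd.re_mul, Zsqrtd.im_mul]
      constructor <;> ring
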